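/- Let T and C be independent random variables, Y = min(T,C) and δ = 1{T ≤ C}. For a fixed u with P(C > u) > 0 and T^u = min(T, u), Y^u = min(Y, u), Δ = 1{Y > u} + 1{Y ≤ u, δ = 1}, the inverse-probability-of-censoring weighting identity holds: E[Δ g(Y^u) / G(Y^u−)] = E[g(T^u)] for any bounded measurable g, where G(t) = P(C ≥ t), provided G(Y^u−) > 0 almost surely on {Δ = 1}. (Prove it assuming C has a continuous distribution so that G(t−) = P(C ≥ t) = P(C > t) off a null set.) -/

import Mathlib

/-!
Off the null set `{T = C} ∪ {C = u}` (null because `C` has no atoms and is independent of `T`),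
`Δ = 1{T^u ≤ C}` and `Y^u = T^u` on `{Δ = 1}`. By independence, the law of `(T, C)` is a product,
so integrating out `C` first replaces `1{T^u ≤ C}` by `P(C ≥ T^u) = G(T^u)`, which cancels the
weight `1 / G(T^u)`.
-/

open MeasureTheory ProbabilityTheory

namespace ProbabilityTheory

variable {Ω α β E : Type*} {mΩ : MeasurableSpace Ω} {μ : Measure Ω} [IsFiniteMeasure μ]
  [MeasurableSpace α] [MeasurableSpace β] [NormedAddCommGroup E] [NormedSpace ℝ E]
  {X : Ω → α} {Y : Ω → β}

lemma IndepFun.integral_comp_eq_integral_integral (hX : Measurable X) (hY : Measurable Y)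
    (hXY : IndepFun X Y μ) {f : α × β → E} (hf : Integrable f ((μ.map X).prod (μ.map Y))) :
    ∫ ω, f (X ω, Y ω) ∂μ = ∫ x, ∫ y, f (x, y) ∂(μ.map Y) ∂(μ.map X) := by
  have hmap : μ.map (fun ω ↦ (X ω, Y ω)) = (μ.map X).prod (μ.map Y) :=
    (indepFun_iff_map_prod_eq_prod_map_map hX.aemeasurable hY.aemeasurable).mp hXY
  rw [← integral_prod f hf, ← hmap,
    integral_map (hX.prodMk hY).aemeasurable (hmap ▸ hf.aestronglyMeasurable)]

lemma IndepFun.measure_eq_eq_zero [MeasurableEq α] {Z : Ω → α} (hX : Measurable X)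
    (hZ : Measurable Z) (hXZ : IndepFun X Z μ) (hZ_atom : ∀ a, μ {ω | Z ω = a} = 0) :
    μ {ω | X ω = Z ω} = 0 := by
  have hmap : μ.map (fun ω ↦ (X ω, Z ω)) = (μ.map X).prod (μ.map Z) :=
    (indepFun_iff_map_prod_eq_prod_map_map hX.aemeasurable hZ.aemeasurable).mp hXZ
  have hslice (a : α) : μ.map Z (Prod.mk a ⁻¹' Set.diagonal α) = 0 := by
    rw [Measure.map_apply hZ (measurable_prodMk_left measurableSet_diagonal)]
    simpa [Set.preimage, eq_comm] using hZ_atom a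
  calc μ {ω | X ω = Z ω} = μ.map (fun ω ↦ (X ω, Z ω)) (Set.diagonal α) :=
        (Measure.map_apply (hX.prodMk hZ) measurableSet_diagonal).symm
    _ = 0 := by simp [hmap, Measure.prod_apply measurableSet_diagonal, hslice]

lemma IndepFun.integral_ite_le_eq {C : Ω → ℝ} (hX : Measurable X) (hC : Measurable C)
    (hXC : IndepFun X C μ) {τ : α → ℝ} (hτ : Measurable τ) {ψ : α → ℝ}
    (hψ : Integrable ψ (μ.map X)) :
    ∫ ω, (if τ (X ω) ≤ C ω then ψ (X ω) else 0) ∂μ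
      = ∫ ω, ψ (X ω) * (μ {ω' | τ (X ω) ≤ C ω'}).toReal ∂μ := by
  set f : α × ℝ → ℝ := {p | τ p.1 ≤ p.2}.indicator (fun p ↦ ψ p.1)
  have hf : Integrable f ((μ.map X).prod (μ.map C)) :=
    (hψ.comp_fst _).indicator (measurableSet_le (hτ.comp measurable_fst) measurable_snd)
  have hinner : (fun x ↦ ∫ c, f (x, c) ∂(μ.map C))
      = fun x ↦ ψ x * (μ {ω' | τ x ≤ C ω'}).toReal := by
    ext x
    have hfx : (fun c ↦ f (x, c)) = (Set.Ici (τ x)).indicator (fun _ ↦ ψ x) := by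
      ext c; simp [f, Set.indicator]
    rw [hfx, integral_indicator_const _ measurableSet_Ici, measureReal_def,
      Measure.map_apply hC measurableSet_Ici, smul_eq_mul, mul_comm]
    rfl
  calc ∫ ω, (if τ (X ω) ≤ C ω then ψ (X ω) else 0) ∂μ = ∫ ω, f (X ω, C ω) ∂μ := by
        simp [f, Set.indicator]
    _ = ∫ x, ψ x * (μ {ω' | τ x ≤ C ω'}).toReal ∂(μ.map X) := by
        rw [hXC.integral_comp_eq_integral_integral hX hC hf, ← hinner]
    _ = _ := by
        rw [integral_map hX.aemeasurable]
        exact hinner ▸ hf.integral_prod_left.aestronglyMeasurable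

end ProbabilityTheory

lemma censoring_indicator_mul_eq {t c u : ℝ} (htc : t ≠ c) (hcu : c ≠ u) (φ : ℝ → ℝ) :
    ((if u < min t c then (1 : ℝ) else 0) +
      (if min t c ≤ u ∧ (if t ≤ c then (1 : ℝ) else 0) = 1 then 1 else 0)) * φ (min (min t c) u)
      = if min t u ≤ c then φ (min t u) else 0 := by
  rcases lt_or_gt_of_ne htc with htc | hct
  · by_cases htu : u < t
    · simp [htu, htc.le, min_eq_right htu.le, htu.not_ge, (htu.trans htc).le]
    · simp [htu, htc.le, not_lt.mp htu]
  · have hmin : min t c = c := min_eq_right hct.le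
    rcases lt_or_gt_of_ne hcu with hcu | huc
    · simp [hmin, hct.not_ge, hcu.le, hcu.not_gt, not_le.mpr hcu]
    · simp [hmin, huc, hct.not_ge, huc.not_ge, min_eq_right (huc.trans hct).le, huc.le]

theorem stmt_18_general {Ω : Type*} [MeasureSpace Ω] [IsProbabilityMeasure (ℙ : Measure Ω)]
    (T C : Ω → ℝ) (hTmeas : Measurable T) (hCmeas : Measurable C)
    (hindep : IndepFun T C ℙ)
    (hCcont : ∀ t : ℝ, ℙ {ω | C ω = t} = 0)
    (u : ℝ)
    (G : ℝ → ℝ) (hG : ∀ t, G t = (ℙ {ω | t ≤ C ω}).toReal)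
    (hGu : 0 < G u)
    (Y : Ω → ℝ) (hY : ∀ ω, Y ω = min (T ω) (C ω))
    (δ : Ω → ℝ) (hδ : ∀ ω, δ ω = if T ω ≤ C ω then 1 else 0)
    (Δ : Ω → ℝ)
    (hΔ : ∀ ω, Δ ω = (if u < Y ω then (1 : ℝ) else 0) +
      (if Y ω ≤ u ∧ δ ω = 1 then (1 : ℝ) else 0))
    (g : ℝ → ℝ) (hgmeas : Measurable g) (M : ℝ) (hgbdd : ∀ x, |g x| ≤ M) :
    ∫ ω, Δ ω * g (min (Y ω) u) / G (min (Y ω) u) = ∫ ω, g (min (T ω) u) := by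
  have hG_anti : Antitone G := fun a b hab ↦ by
    simp only [hG]
    exact ENNReal.toReal_mono (measure_ne_top _ _) (measure_mono fun ω hω ↦ hab.trans hω)
  have hG_pos (t : ℝ) : 0 < G (min t u) := hGu.trans_le (hG_anti (min_le_right t u))
  set ψ : ℝ → ℝ := fun t ↦ g (min t u) / G (min t u)
  have hψ_meas : Measurable ψ :=
    (hgmeas.comp (measurable_id.min measurable_const)).div
      (hG_anti.measurable.comp (measurable_id.min measurable_const))
  have hψ_bdd (t : ℝ) : ‖ψ t‖ ≤ M / G u := by
    rw [Real.norm_eq_abs, abs_div, abs_of_pos (hG_pos t)]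
    exact div_le_div₀ ((abs_nonneg _).trans (hgbdd 0)) (hgbdd _) hGu (hG_anti (min_le_right t u))
  have hψ_int : Integrable ψ (Measure.map T ℙ) :=
    .of_bound hψ_meas.aestronglyMeasurable _ (.of_forall hψ_bdd)
  have hae : (fun ω ↦ Δ ω * g (min (Y ω) u) / G (min (Y ω) u))
      =ᵐ[ℙ] fun ω ↦ if min (T ω) u ≤ C ω then ψ (T ω) else 0 := by
    have hTC : ∀ᵐ ω ∂ℙ, T ω ≠ C ω :=
      measure_eq_zero_iff_ae_notMem.mp (hindep.measure_eq_eq_zero hTmeas hCmeas hCcont)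
    have hCu : ∀ᵐ ω ∂ℙ, C ω ≠ u := measure_eq_zero_iff_ae_notMem.mp (hCcont u)
    filter_upwards [hTC, hCu] with ω hTC hCu
    rw [hΔ, hY, hδ, mul_div_assoc]
    exact censoring_indicator_mul_eq hTC hCu (fun x ↦ g x / G x)
  rw [integral_congr_ae hae, hindep.integral_ite_le_eq hTmeas hCmeas
    (τ := fun t ↦ min t u) (measurable_id.min measurable_const) hψ_int]
  congr with ω
  rw [← hG, div_mul_cancel₀ _ (hG_pos _).ne']

/-- Inverse-probability-of-censoring weighting identity: for independent event time `T`
and censoring `C` with `C` continuously distributed, `Y = T ∧ C`, `δ = 1{T ≤ C}`,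
`Y^u = Y ∧ u`, `T^u = T ∧ u`, `Δ = 1{Y > u} + 1{Y ≤ u, δ = 1}` and `G(t) = P(C ≥ t)`,
we have `E[Δ g(Y^u)/G(Y^u)] = E[g(T^u)]` for any bounded measurable `g`. -/
theorem stmt_18 {Ω : Type*} [MeasureSpace Ω] [IsProbabilityMeasure (ℙ : Measure Ω)]
    (T C : Ω → ℝ) (hTmeas : Measurable T) (hCmeas : Measurable C)
    (hTnonneg : ∀ ω, 0 ≤ T ω) (hCnonneg : ∀ ω, 0 ≤ C ω)
    (hindep : IndepFun T C ℙ)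
    (hCcont : ∀ t : ℝ, ℙ {ω | C ω = t} = 0)
    (u : ℝ) (hu : 0 < u)
    (G : ℝ → ℝ) (hG : ∀ t, G t = (ℙ {ω | t ≤ C ω}).toReal)
    (hGu : 0 < G u)
    (Y : Ω → ℝ) (hY : ∀ ω, Y ω = min (T ω) (C ω))
    (δ : Ω → ℝ) (hδ : ∀ ω, δ ω = if T ω ≤ C ω then 1 else 0)
    (Δ : Ω → ℝ)
    (hΔ : ∀ ω, Δ ω = (if u < Y ω then (1 : ℝ) else 0) +
      (if Y ω ≤ u ∧ δ ω = 1 then (1 : ℝ) else 0))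
    (g : ℝ → ℝ) (hgmeas : Measurable g) (M : ℝ) (hgbdd : ∀ x, |g x| ≤ M) :
    ∫ ω, Δ ω * g (min (Y ω) u) / G (min (Y ω) u) = ∫ ω, g (min (T ω) u) :=
  stmt_18_general T C hTmeas hCmeas hindep hCcont u G hG hGu Y hY δ hδ Δ hΔ g hgmeas M hgbdd
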